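/- Jacobi's identity: as formal power series over ℤ, ∏_{m≥1}(1 - q^m)³ = ∑_{μ=0}^{∞} (-1)^μ (2μ+1) q^{μ(μ+1)/2}. -/

import Mathlib

open PowerSeries Finset

/-- The Euler product `(q;q)_∞ = ∏_{m≥1} (1 - q^m)` as a formal power series over `ℤ`. -/
noncomputable def eulerProd : PowerSeries ℤ :=
  PowerSeries.mk fun n =>
    PowerSeries.coeff n (∏ k ∈ Finset.range (n + 1), (1 - (X : PowerSeries ℤ) ^ (1 + k)))

/-!
Consider the finite triple product `H_n(z) = ∏_{k=1}^n (z - q^(k-1)) (1 - z q^k)`. The substitution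
`z ↦ q^n z` turns it into `(-1)^n q^(n(n-1)/2) ∏_{i=1}^{2n} (1 - z q^i)`, so by the q-binomial
theorem the coefficient of `z^m` in `H_n` is `(-1)^(n+m) q^(d(d+1)/2) [2n, m]_q` with `d = m - n`.
Since `H_n(1) = 0`, differentiating at `z = 1` gives
`(q;q)_n (q;q)_(n-1) = ∑_m (m - n) (-1)^(n+m) q^(d(d+1)/2) [2n, m]_q`.
Now work modulo `q^K` with `n ≥ 2K`. Every `(q;q)_j` with `j ≥ K` is congruent to `(q;q)_∞`, so
after multiplying by `(q;q)_n` the left side becomes `(q;q)_∞³`, and in each term with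
`d(d+1)/2 < K` the factor `(q;q)_n [2n, m]_q = (q;q)_n (q;q)_(2n) / ((q;q)_m (q;q)_(2n-m))`
becomes `1`. Finally the terms `d = μ + 1` and `d = -μ - 1` share the exponent `μ(μ+1)/2` and
together contribute `(-1)^μ (2μ + 1) q^(μ(μ+1)/2)`.
-/

def triangular (d : ℤ) : ℕ := (d * (d + 1) / 2).toNat

lemma two_mul_triangular (d : ℤ) : 2 * (triangular d : ℤ) = d * (d + 1) := by
  have hnonneg : 0 ≤ d * (d + 1) := by rcases le_or_gt 0 d with h | h <;> nlinarith
  rw [triangular, Int.toNat_of_nonneg (Int.ediv_nonneg hnonneg zero_le_two),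
    Int.mul_ediv_cancel' (Int.even_mul_succ_self d).two_dvd]

lemma triangular_neg_sub_one (d : ℤ) : triangular (-d - 1) = triangular d := by
  unfold triangular; ring_nf

lemma le_triangular (d : ℤ) : d ≤ triangular d := by
  have := two_mul_triangular d
  rcases le_or_gt d 0 with h | h <;> nlinarith

lemma triangular_natCast (j : ℕ) : triangular j = j * (j + 1) / 2 := by
  have h : 2 * triangular j = j * (j + 1) := by exact_mod_cast two_mul_triangular j
  omega

lemma choose_two_add_choose_two_eq (n m : ℕ) :
    n.choose 2 + (m + 1).choose 2 = n * m + triangular (m - n) := by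
  have h : 2 * (triangular (m - n) : ℚ) = ((m : ℚ) - n) * ((m : ℚ) - n + 1) := by
    exact_mod_cast two_mul_triangular (m - n)
  qify
  rw [Nat.cast_choose_two, Nat.cast_choose_two]
  push_cast
  linarith

section FiniteJacobi

variable {A : Type*} [CommRing A] (q : A)

def qPochhammer (n : ℕ) : A := ∏ i ∈ range n, (1 - q ^ (i + 1))

def qBinomial : ℕ → ℕ → A
  | _, 0 => 1
  | 0, _ + 1 => 0
  | n + 1, k + 1 => qBinomial n k + q ^ (k + 1) * qBinomial n (k + 1)

@[simp] lemma qBinomial_zero_right (n : ℕ) : qBinomial q n 0 = 1 := by cases n <;> rfl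

lemma qBinomial_succ_succ (n k : ℕ) :
    qBinomial q (n + 1) (k + 1) = qBinomial q n k + q ^ (k + 1) * qBinomial q n (k + 1) := rfl

lemma qBinomial_of_lt : ∀ {n k : ℕ}, n < k → qBinomial q n k = 0
  | 0, _ + 1, _ => rfl
  | n + 1, k + 1, h => by
    rw [qBinomial_succ_succ, qBinomial_of_lt (by omega), qBinomial_of_lt (by omega), mul_zero,
      add_zero]

lemma qPochhammer_succ (n : ℕ) : qPochhammer q (n + 1) = qPochhammer q n * (1 - q ^ (n + 1)) :=
  prod_range_succ _ n

@[simp] lemma qBinomial_self : ∀ n : ℕ, qBinomial q n n = 1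
  | 0 => rfl
  | n + 1 => by rw [qBinomial_succ_succ, qBinomial_self n, qBinomial_of_lt q n.lt_succ_self]; ring

lemma qBinomial_mul_qPochhammer_mul_qPochhammer :
    ∀ {n k : ℕ}, k ≤ n →
      qBinomial q n k * qPochhammer q k * qPochhammer q (n - k) = qPochhammer q n
  | n, 0, _ => by simp [qPochhammer]
  | 0, _ + 1, h => absurd h (by omega)
  | n + 1, k + 1, h => by
    obtain rfl | hk := eq_or_lt_of_le (Nat.le_of_succ_le_succ h)
    · simp [qPochhammer]
    obtain ⟨d, rfl⟩ := Nat.exists_eq_add_of_lt hk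
    have h₁ := qBinomial_mul_qPochhammer_mul_qPochhammer (n := k + d + 1) (k := k) (by omega)
    have h₂ := qBinomial_mul_qPochhammer_mul_qPochhammer (n := k + d + 1) (k := k + 1) (by omega)
    rw [show k + d + 1 - k = d + 1 by omega, qPochhammer_succ q d] at h₁
    rw [show k + d + 1 - (k + 1) = d by omega, qPochhammer_succ q k] at h₂
    rw [show k + d + 1 + 1 - (k + 1) = d + 1 by omega, qBinomial_succ_succ, qPochhammer_succ q k,
      qPochhammer_succ q d, qPochhammer_succ q (k + d + 1)]
    linear_combination (1 - q ^ (k + 1)) * h₁ + q ^ (k + 1) * (1 - q ^ (d + 1)) * h₂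

theorem coeff_prod_one_add_C_mul_X (a : A) (N m : ℕ) :
    (∏ i ∈ range N, (1 + Polynomial.C (a * q ^ i) * Polynomial.X)).coeff m =
      a ^ m * q ^ m.choose 2 * qBinomial q N m := by
  induction N generalizing a m with
  | zero => cases m <;> simp [Polynomial.coeff_one, qBinomial]
  | succ N ih =>
    have hshift : ∏ i ∈ range N, (1 + Polynomial.C (a * q ^ (i + 1)) * Polynomial.X) =
        ∏ i ∈ range N, (1 + Polynomial.C (a * q * q ^ i) * Polynomial.X) := by
      simp only [pow_succ', mul_assoc]
    rw [prod_range_succ', hshift, pow_zero, mul_one, mul_add, mul_one, ← mul_assoc,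
      mul_comm _ (Polynomial.C a), Polynomial.coeff_add, mul_assoc, Polynomial.coeff_C_mul]
    cases m with
    | zero => simpa using ih (a * q) 0
    | succ k =>
      rw [Polynomial.coeff_mul_X, ih, ih, qBinomial_succ_succ, Nat.choose_succ_succ,
        Nat.choose_one_right]
      ring

lemma sum_range_sub_mul_coeff_eq_eval_one {p g : Polynomial A}
    (hp : p = (Polynomial.X - 1) * g) {N : ℕ} (hN : p.natDegree < N) (c : A) :
    ∑ m ∈ range N, ((m : A) - c) * p.coeff m = g.eval 1 := by
  have h₀ : p.eval 1 = 0 := by simp [hp]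
  have h₁ : (Polynomial.derivative p).eval 1 = g.eval 1 := by
    simp [hp, Polynomial.derivative_mul]
  rw [Polynomial.eval_eq_sum_range' hN] at h₀
  rw [Polynomial.derivative_eval, Polynomial.sum_over_range' _ (by simp) N hN] at h₁
  simp only [one_pow, mul_one] at h₀ h₁
  simp only [sub_mul, sum_sub_distrib, ← mul_sum, h₀, mul_zero, sub_zero, ← h₁]
  exact sum_congr rfl fun m _ => mul_comm _ _

lemma sum_range_sub_mul_neg_one_pow_mul_pow_triangular (n : ℕ) :
    ∑ m ∈ range (2 * n + 1), ((m : A) - n) * ((-1) ^ (n + m) * q ^ triangular (m - n)) =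
      ∑ μ ∈ range n, (-1) ^ μ * (2 * μ + 1) * q ^ triangular μ +
        (-1) ^ n * n * q ^ triangular n := by
  rw [show 2 * n + 1 = n + (n + 1) by ring, sum_range_add, ← sum_range_reflect, sum_range_succ,
    ← add_assoc, ← sum_add_distrib]
  congr 1
  · refine sum_congr rfl fun μ hμ => ?_
    obtain ⟨k, rfl⟩ : ∃ k, n = μ + 1 + k := ⟨n - 1 - μ, by have := mem_range.1 hμ; omega⟩
    have hleft : ((k : ℕ) : ℤ) - ((μ + 1 + k : ℕ) : ℤ) = -μ - 1 := by push_cast; ring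
    have hright : ((μ + 1 + k + μ : ℕ) : ℤ) - ((μ + 1 + k : ℕ) : ℤ) = μ := by push_cast; ring
    rw [show μ + 1 + k - 1 - μ = k by omega, hleft, hright, triangular_neg_sub_one,
      show μ + 1 + k + k = (μ + 1) + 2 * k by ring,
      show μ + 1 + k + (μ + 1 + k + μ) = μ + 2 * (μ + 1 + k) by ring]
    simp only [pow_add, pow_mul, neg_one_sq, one_pow]
    push_cast
    ring
  · rw [show n + n = 2 * n by ring, pow_add, pow_mul, neg_one_sq, one_pow,
      show ((2 * n : ℕ) : ℤ) - n = n by push_cast; ring]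
    push_cast
    ring

noncomputable def jacobiPoly (n : ℕ) : Polynomial A :=
  ∏ k ∈ range n,
    (Polynomial.X - Polynomial.C (q ^ k)) * (1 - Polynomial.C (q ^ (k + 1)) * Polynomial.X)

lemma jacobiPoly_comp_C_mul_X (n : ℕ) :
    (jacobiPoly q n).comp (Polynomial.C (q ^ n) * Polynomial.X) =
      Polynomial.C ((-1) ^ n * q ^ n.choose 2) *
        ∏ i ∈ range (2 * n), (1 + Polynomial.C (-q * q ^ i) * Polynomial.X) := by
  have hfactor : ∀ k ∈ range n,
      ((Polynomial.X - Polynomial.C (q ^ k)) * (1 - Polynomial.C (q ^ (k + 1)) * Polynomial.X)).comp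
        (Polynomial.C (q ^ n) * Polynomial.X) =
      Polynomial.C (-q ^ k) * ((1 + Polynomial.C (-q * q ^ (n - 1 - k)) * Polynomial.X) *
        (1 + Polynomial.C (-q * q ^ (n + k)) * Polynomial.X)) := by
    intro k hk
    obtain ⟨j, rfl⟩ : ∃ j, n = k + 1 + j := ⟨n - 1 - k, by have := mem_range.1 hk; omega⟩
    rw [show k + 1 + j - 1 - k = j by omega]
    simp only [Polynomial.mul_comp, Polynomial.sub_comp, Polynomial.one_comp, Polynomial.X_comp,
      Polynomial.C_comp]
    simp only [map_mul, map_neg, map_pow]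
    ring
  rw [jacobiPoly, Polynomial.prod_comp, prod_congr rfl hfactor, prod_mul_distrib, prod_mul_distrib,
    prod_range_reflect (fun i => 1 + Polynomial.C (-q * q ^ i) * Polynomial.X), two_mul,
    prod_range_add, ← map_prod, prod_neg, prod_pow_eq_pow_sum, sum_range_id, ← Nat.choose_two_right,
    card_range]

lemma jacobiPoly_succ (n : ℕ) :
    jacobiPoly q (n + 1) = (Polynomial.X - 1) *
      ((∏ k ∈ range n, (Polynomial.X - Polynomial.C (q ^ (k + 1)))) *
        ∏ k ∈ range (n + 1), (1 - Polynomial.C (q ^ (k + 1)) * Polynomial.X)) := by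
  rw [jacobiPoly, prod_mul_distrib, prod_range_succ' (fun k => Polynomial.X - Polynomial.C (q ^ k))]
  simp only [pow_zero, map_one]
  ring

variable {q} [IsDomain A]

theorem coeff_jacobiPoly (hq : q ≠ 0) (n m : ℕ) :
    (jacobiPoly q n).coeff m = (-1) ^ (n + m) * q ^ triangular (m - n) * qBinomial q (2 * n) m := by
  have h := congrArg (Polynomial.coeff · m) (jacobiPoly_comp_C_mul_X q n)
  simp only [Polynomial.comp_C_mul_X_coeff, Polynomial.coeff_C_mul,
    coeff_prod_one_add_C_mul_X] at h
  have hexp : n.choose 2 + (m + m.choose 2) = n * m + triangular (m - n) := by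
    rw [← choose_two_add_choose_two_eq, Nat.choose_succ_succ, Nat.choose_one_right]
  apply mul_right_cancel₀ (pow_ne_zero (n * m) hq)
  rw [pow_mul, h, neg_pow]
  calc _ = (-1) ^ (n + m) * q ^ (n.choose 2 + (m + m.choose 2)) * qBinomial q (2 * n) m := by ring
    _ = _ := by rw [hexp]; ring

lemma natDegree_jacobiPoly_lt (hq : q ≠ 0) (n : ℕ) :
    (jacobiPoly q n).natDegree < 2 * n + 1 :=
  Nat.lt_succ_of_le <| Polynomial.natDegree_le_iff_coeff_eq_zero.2 fun m hm => by
    rw [coeff_jacobiPoly hq, qBinomial_of_lt q hm, mul_zero]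

theorem qPochhammer_mul_qPochhammer_pred_eq_sum (hq : q ≠ 0) {n : ℕ} (hn : 0 < n) :
    qPochhammer q n * qPochhammer q (n - 1) = ∑ m ∈ range (2 * n + 1),
      ((m : A) - n) * ((-1) ^ (n + m) * q ^ triangular (m - n) * qBinomial q (2 * n) m) := by
  obtain ⟨n, rfl⟩ := Nat.exists_eq_add_one_of_ne_zero hn.ne'
  simp_rw [← coeff_jacobiPoly hq]
  rw [sum_range_sub_mul_coeff_eq_eval_one (jacobiPoly_succ q n) (natDegree_jacobiPoly_lt hq _)]
  simp [qPochhammer, Polynomial.eval_prod, mul_comm]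

end FiniteJacobi

notation "π[" K "]" => Ideal.Quotient.mk (Ideal.span {PowerSeries.X ^ K})

section Truncation

variable {A : Type*} [CommRing A] {K : ℕ}

lemma mk_span_X_pow_eq_mk_iff {f g : A⟦X⟧} :
    π[K] f = π[K] g ↔ ∀ j < K, coeff j f = coeff j g := by
  simp only [Ideal.Quotient.eq, Ideal.mem_span_singleton, X_pow_dvd_iff, map_sub, sub_eq_zero]

lemma mk_span_X_pow_X_pow {j : ℕ} (h : K ≤ j) : π[K] (X ^ j : A⟦X⟧) = 0 :=
  Ideal.Quotient.eq_zero_iff_mem.2 (Ideal.mem_span_singleton.2 (pow_dvd_pow X h))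

lemma coeff_qPochhammer_X_of_lt {j a b : ℕ} (hj : j < a) (hab : a ≤ b) :
    coeff j (qPochhammer (X : A⟦X⟧) b) = coeff j (qPochhammer (X : A⟦X⟧) a) := by
  induction b, hab using Nat.le_induction with
  | base => rfl
  | succ b hab ih =>
    rw [qPochhammer_succ, mul_sub, mul_one, map_sub, mul_comm, coeff_X_pow_mul', if_neg (by omega),
      sub_zero, ih]

lemma mk_qPochhammer_X_eq {a b : ℕ} (ha : K ≤ a) (hb : K ≤ b) :
    π[K] (qPochhammer (X : A⟦X⟧) a) = π[K] (qPochhammer X b) :=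
  mk_span_X_pow_eq_mk_iff.2 fun j hj => by
    rw [coeff_qPochhammer_X_of_lt hj ha, coeff_qPochhammer_X_of_lt hj hb]

lemma isUnit_qPochhammer_X (n : ℕ) : IsUnit (qPochhammer (X : A⟦X⟧) n) := by
  simp [isUnit_iff_constantCoeff, qPochhammer]

lemma mk_qBinomial_X_mul_qPochhammer_X {n k a : ℕ} (hkn : k ≤ n) (hk : K ≤ k) (hnk : K ≤ n - k)
    (ha : K ≤ a) :
    π[K] (qBinomial X n k * qPochhammer (X : A⟦X⟧) a) = 1 := by
  have hu := (isUnit_qPochhammer_X (A := A) a).map (π[K])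
  have h := congrArg (π[K]) (qBinomial_mul_qPochhammer_mul_qPochhammer (X : A⟦X⟧) hkn)
  rw [map_mul, map_mul, mk_qPochhammer_X_eq hk ha, mk_qPochhammer_X_eq hnk ha,
    mk_qPochhammer_X_eq (hk.trans hkn) ha] at h
  rw [map_mul]
  exact hu.mul_left_cancel (by rwa [mul_one, mul_comm])

lemma mk_qPochhammer_X_mul_jacobi_term {n m : ℕ} (hn : 2 * K ≤ n) (hm : m ≤ 2 * n) :
    π[K] (qPochhammer (X : A⟦X⟧) n *
        ((-1) ^ (n + m) * X ^ triangular (m - n) * qBinomial X (2 * n) m)) =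
      π[K] ((-1) ^ (n + m) * X ^ triangular (m - n)) := by
  by_cases ht : K ≤ triangular (m - n)
  · simp [mk_span_X_pow_X_pow ht]
  have h₁ := le_triangular (m - n)
  have h₂ := le_triangular (-(m - n) - 1)
  rw [triangular_neg_sub_one] at h₂
  -- a small exponent forces `|m - n| ≤ K`, so that `m` and `2n - m` are both at least `K`
  rw [mul_left_comm, map_mul, mul_comm (qPochhammer _ _),
    mk_qBinomial_X_mul_qPochhammer_X hm (by omega) (by omega) (by omega), mul_one]

end Truncation

lemma coeff_eulerProd {j a : ℕ} (hj : j < a) :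
    coeff j eulerProd = coeff j (qPochhammer (X : ℤ⟦X⟧) a) := by
  rw [coeff_qPochhammer_X_of_lt j.lt_succ_self hj, eulerProd, coeff_mk, qPochhammer]
  simp only [add_comm 1]

lemma mk_eulerProd {K a : ℕ} (ha : K ≤ a) : π[K] eulerProd = π[K] (qPochhammer X a) :=
  mk_span_X_pow_eq_mk_iff.2 fun _ hj => coeff_eulerProd (hj.trans_le ha)

lemma mk_sum_range_neg_one_pow_mul_X_pow_triangular {K n : ℕ} (hn : K ≤ n) :
    π[K] (∑ μ ∈ range n, (-1 : ℤ⟦X⟧) ^ μ * (2 * (μ : ℤ⟦X⟧) + 1) * X ^ triangular μ) =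
      π[K] (PowerSeries.mk fun N => ∑ μ ∈ range (N + 1),
        if μ * (μ + 1) / 2 = N then (-1 : ℤ) ^ μ * (2 * μ + 1) else 0) := by
  refine mk_span_X_pow_eq_mk_iff.2 fun j hj => ?_
  have hterm (μ : ℕ) : coeff j ((-1 : ℤ⟦X⟧) ^ μ * (2 * (μ : ℤ⟦X⟧) + 1) * X ^ triangular μ) =
      if μ * (μ + 1) / 2 = j then (-1 : ℤ) ^ μ * (2 * μ + 1) else 0 := by
    have hC : (-1 : ℤ⟦X⟧) ^ μ * (2 * (μ : ℤ⟦X⟧) + 1) = C ((-1 : ℤ) ^ μ * (2 * μ + 1)) := by simp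
    rw [hC, coeff_C_mul_X_pow, triangular_natCast]
    simp [eq_comm]
  rw [coeff_mk, map_sum]
  simp_rw [hterm]
  refine (sum_subset (range_subset_range.2 (by omega)) fun μ _ hμ => if_neg fun h => ?_).symm
  have := le_triangular μ
  rw [triangular_natCast, h] at this
  rw [mem_range, not_lt] at hμ
  omega

/-- Jacobi's identity `(q;q)_∞³ = ∑_{μ≥0} (-1)^μ (2μ+1) q^{μ(μ+1)/2}`. -/
theorem jacobi_cube_identity :
    eulerProd ^ 3 =
      PowerSeries.mk (fun N => ∑ μ ∈ Finset.range (N + 1),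
        if μ * (μ + 1) / 2 = N then (-1 : ℤ) ^ μ * (2 * μ + 1) else 0) := by
  ext N
  refine mk_span_X_pow_eq_mk_iff.1 ?_ N N.lt_succ_self
  set n := 2 * (N + 1)
  calc π[N + 1] (eulerProd ^ 3) =
        π[N + 1] (qPochhammer X n * (qPochhammer X n * qPochhammer X (n - 1))) := by
        rw [map_pow, map_mul, map_mul, ← mk_eulerProd (by omega), ← mk_eulerProd (by omega)]; ring
    _ = π[N + 1] (∑ m ∈ range (2 * n + 1),
          ((m : ℤ⟦X⟧) - (n : ℤ⟦X⟧)) * ((-1) ^ (n + m) * X ^ triangular (m - n))) := by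
        rw [qPochhammer_mul_qPochhammer_pred_eq_sum X_ne_zero (by omega), mul_sum, map_sum, map_sum]
        refine sum_congr rfl fun m hm => ?_
        rw [mul_left_comm, map_mul,
          mk_qPochhammer_X_mul_jacobi_term le_rfl (by have := mem_range.1 hm; omega), ← map_mul]
    _ = π[N + 1] (PowerSeries.mk fun N => ∑ μ ∈ range (N + 1),
          if μ * (μ + 1) / 2 = N then (-1 : ℤ) ^ μ * (2 * μ + 1) else 0) := by
        rw [sum_range_sub_mul_neg_one_pow_mul_pow_triangular, map_add, map_mul,
          mk_span_X_pow_X_pow (by have := le_triangular n; omega), mul_zero, add_zero,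
          mk_sum_range_neg_one_pow_mul_X_pow_triangular (by omega)]
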